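/- Let b ≥ 2 be an integer. (i) For every k ∈ ℕ, I(k) = b^{−μ(k)} / ∏_{i=1}^{v} (1 − ω_b^{−κ_i}) (the empty product for k = 0 being 1). (ii) For every positive integer k, W_k(b^{−a_v}) = b^{−μ(k)} / ∏_{i=1}^{v−1} (1 − ω_b^{−κ_i}) (the empty product for v = 1 being 1). (iii) For every positive integer k, every x ∈ [0,1) written as x = c·b^{−a_v} + x' with c ∈ ℕ, 0 ≤ c < b^{a_v}, and x' ∈ [0, b^{−a_v}): W_k(x) = (1 − ω_b^{−cκ_v})·I(k) + ω_b^{−cκ_v}·W_k(x'). -/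

import Mathlib

open MeasureTheory Complex
open scoped ENNReal NNReal

noncomputable section

namespace WalshPaper

/-- `ω_b = exp(2π√-1/b)`. -/
def omega (b : ℕ) : ℂ := Complex.exp (2 * Real.pi * Complex.I / b)

/-- `conj ω_b`. -/
def omegaBar (b : ℕ) : ℂ := (starRingEnd ℂ) (omega b)

/-- The `j`-th `b`-adic digit `ξ_j` of `x ∈ [0,1)` (the coefficient of `b^{-j}`),
taking the expansion with infinitely many digits different from `b-1`. -/
def xdigit (b j : ℕ) (x : ℝ) : ℕ := (⌊x * (b : ℝ) ^ j⌋ % (b : ℤ)).toNat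

/-- The `k`-th `b`-adic Walsh function: `wal_k(x) = ω_b^(κ_1 ξ_{a_1} + ⋯ + κ_v ξ_{a_v})`,
written as a sum over all digit positions of `k` (digits of `k` beyond position `k` vanish). -/
def wal (b k : ℕ) (x : ℝ) : ℂ :=
  omega b ^ ∑ j ∈ Finset.range k, (k / b ^ j % b) * xdigit b (j + 1) x

/-- The list of terms `κ_i b^{a_i - 1}` of the `b`-adic expansion of `k`, lowest first,
i.e. `[κ_v b^{a_v-1}, …, κ_1 b^{a_1-1}]`. -/
def terms (b k : ℕ) : List ℕ :=
  (((Nat.digits b k).zipIdx.map Prod.swap).filter fun p => p.2 ≠ 0).map fun p => p.2 * b ^ p.1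

/-- `v(k)`, the number of nonzero `b`-adic digits of `k`. -/
def nu (b k : ℕ) : ℕ := (terms b k).length

/-- The list `[a_1, …, a_v]` (decreasing). -/
def alist (b k : ℕ) : List ℕ :=
  ((((Nat.digits b k).zipIdx.map Prod.swap).filter fun p => p.2 ≠ 0).map fun p => p.1 + 1).reverse

/-- The list `[κ_v, κ_{v-1}, …, κ_1]` (corresponding digits, lowest first). -/
def kappas (b k : ℕ) : List ℕ :=
  (((Nat.digits b k).zipIdx.map Prod.swap).filter fun p => p.2 ≠ 0).map fun p => p.2

/-- `μ(k) = a_1 + ⋯ + a_v`. -/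
def mu (b k : ℕ) : ℕ := (alist b k).sum

/-- `μ_α(k) = a_1 + ⋯ + a_{min(α,v)}`. -/
def muAlpha (b α k : ℕ) : ℕ := ((alist b k).take α).sum

/-- `a_v`, the smallest exponent (junk value `0` for `k = 0`). -/
def aLow (b k : ℕ) : ℕ := ((alist b k).getLast?).getD 0

/-- `κ_v`, the lowest nonzero digit of `k`. -/
def kapLow (b k : ℕ) : ℕ := k / b ^ (aLow b k - 1) % b

/-- `μ̄_α(k)`: equals `a_1 + ⋯ + a_v + (α - v) a_v` if `v ≤ α`, and `a_1 + ⋯ + a_α` else. -/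
def muBar (b α k : ℕ) : ℕ :=
  if nu b k ≤ α then mu b k + (α - nu b k) * aLow b k else muAlpha b α k

/-- `k_{≤ n} = Σ_{i=1}^{min(n,v)} κ_i b^{a_i - 1}` (the `min(n,v)` highest terms). -/
def kHigh (b k n : ℕ) : ℕ := ((terms b k).reverse.take n).sum

/-- `k_{> n} = Σ_{i=n+1}^{v} κ_i b^{a_i - 1}` (the remaining lower terms). -/
def kLow (b k n : ℕ) : ℕ := ((terms b k).reverse.drop n).sum

/-- Auxiliary function defining `W` along the list of terms of `k`, lowest term first. -/
def WAux (b : ℕ) : List ℕ → ℝ → ℂ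
  | [], _ => 1
  | t :: rest, x => ∫ y in (0:ℝ)..x, (starRingEnd ℂ) (wal b t y) * WAux b rest y

/-- `W_k : [0,1] → ℂ`, defined by `W_0 = 1` and `W_k(x) = ∫_0^x conj(wal_{κ_v b^{a_v-1}}(y)) W_{k'}(y) dy`
with `k' = k - κ_v b^{a_v-1}`. -/
def W (b k : ℕ) (x : ℝ) : ℂ := WAux b (terms b k) x

/-- `I(k) = ∫_0^1 W_k(x) dx`. -/
def I (b k : ℕ) : ℂ := ∫ x in (0:ℝ)..1, W b k x

/-- The iterated functions `W_k^{(j)}`: `W_k^{(0)} = W_k`,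
`W_k^{(j+1)}(x) = ∫_0^x (W_k^{(j)}(y) - I^{(j)}(k)) dy` where `I^{(j)}(k) = ∫_0^1 W_k^{(j)}`. -/
def Wj (b k : ℕ) : ℕ → ℝ → ℂ
  | 0 => W b k
  | j + 1 => fun x => ∫ y in (0:ℝ)..x, (Wj b k j y - ∫ t in (0:ℝ)..1, Wj b k j t)

/-- `I^{(j)}(k) = ∫_0^1 W_k^{(j)}(x) dx`. -/
def Ij (b k j : ℕ) : ℂ := ∫ x in (0:ℝ)..1, Wj b k j x

/-- The `k`-th Walsh coefficient of `f : [0,1) → ℝ`. -/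
def walshCoeff (b : ℕ) (f : ℝ → ℝ) (k : ℕ) : ℂ :=
  ∫ x in (0:ℝ)..1, (f x : ℂ) * (starRingEnd ℂ) (wal b k x)

/-- The half-open unit cube `[0,1)^s`. -/
def cube (s : ℕ) : Set (Fin s → ℝ) := Set.univ.pi fun _ => Set.Ico (0:ℝ) 1

/-- The closed unit cube `[0,1]^s`. -/
def cubeC (s : ℕ) : Set (Fin s → ℝ) := Set.univ.pi fun _ => Set.Icc (0:ℝ) 1

/-- The `k⃗`-th Walsh coefficient of `f : [0,1)^s → ℝ`. -/
def walshCoeffS (b s : ℕ) (f : (Fin s → ℝ) → ℝ) (k : Fin s → ℕ) : ℂ :=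
  ∫ x in cube s, (f x : ℂ) * (starRingEnd ℂ) (∏ j, wal b (k j) (x j))

/-- `m_b = 2 sin(π/b)`. -/
def mb (b : ℕ) : ℝ := 2 * Real.sin (Real.pi / b)

/-- `M_b = max_{c=1,…,b-1} |1 - ω_b^{-c}|`. -/
def Mb (b : ℕ) : ℝ := if Even b then 2 else 2 * Real.sin ((b + 1) * Real.pi / (2 * b))

/-- `C_v(b) = (b m_b/(b - M_b)) (1 - (M_b/b)^v)`. -/
def Cv (b v : ℕ) : ℝ := (b * mb b / (b - Mb b)) * (1 - (Mb b / b) ^ v)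

/-- The partial derivative of `g` in the `j`-th coordinate. -/
def pderiv {s : ℕ} (j : Fin s) (g : (Fin s → ℝ) → ℝ) (x : Fin s → ℝ) : ℝ :=
  deriv (fun t => g (Function.update x j t)) (x j)

/-- The mixed partial derivative `f^{(m_1,…,m_s)} = (∂/∂x_1)^{m_1} ⋯ (∂/∂x_s)^{m_s} f`. -/
def mixedPartial {s : ℕ} (m : Fin s → ℕ) (f : (Fin s → ℝ) → ℝ) : (Fin s → ℝ) → ℝ :=
  (List.finRange s).foldr (fun j g => (fun h => pderiv j h)^[m j] g) f

/-- `f` has continuous mixed partial derivatives up to order `α_j` in each variable `x_j`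
on the unit cube. -/
def HasContMixedPartials {s : ℕ} (α : Fin s → ℕ) (f : (Fin s → ℝ) → ℝ) : Prop :=
  ∀ m : Fin s → ℕ, (∀ j, m j ≤ α j) →
    ContinuousOn (mixedPartial m f) (cubeC s) ∧
      ∀ j : Fin s, m j < α j → ∀ x ∈ cubeC s,
        DifferentiableAt ℝ (fun t => mixedPartial m f (Function.update x j t)) (x j)

/-- `b_r(x) = B_r(x)/r!`, the normalized Bernoulli polynomial. -/
def bpoly (r : ℕ) (x : ℝ) : ℝ := (Polynomial.aeval x) (Polynomial.bernoulli r) / r.factorial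

/-- `b̃_α(x-y)`. -/
def btilde (α : ℕ) (x y : ℝ) : ℝ :=
  if Even α then bpoly α |x - y| else (if x < y then -1 else 1) * bpoly α |x - y|


variable {b : ℕ}

lemma bC_ne (hb : 2 ≤ b) : (b : ℂ) ≠ 0 := Nat.cast_ne_zero.mpr (by omega)

lemma omega_pow_b (hb : 2 ≤ b) : omega b ^ b = 1 := by
  rw [omega, ← Complex.exp_nat_mul]
  have hbne : (b : ℂ) ≠ 0 := Nat.cast_ne_zero.mpr (by omega)
  rw [mul_div_assoc', mul_comm, mul_div_assoc, div_self hbne, mul_one, Complex.exp_two_pi_mul_I]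

lemma omegaBar_pow_b (hb : 2 ≤ b) : omegaBar b ^ b = 1 := by
  rw [omegaBar, ← map_pow, omega_pow_b hb, map_one]

lemma norm_omega (hb : 2 ≤ b) : ‖omega b‖ = 1 := by
  rw [omega, Complex.norm_exp]
  have : (2 * Real.pi * Complex.I / b).re = 0 := by
    have hbne : (b : ℂ) ≠ 0 := Nat.cast_ne_zero.mpr (by omega)
    simp [Complex.div_re, Complex.mul_re, Complex.mul_im]
  rw [this, Real.exp_zero]

lemma omegaBar_pow_ne_one (hb : 2 ≤ b) {d : ℕ} (hd1 : 0 < d) (hd2 : d < b) :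
    omegaBar b ^ d ≠ 1 := by
  rw [omegaBar, ← map_pow, omega, ← Complex.exp_nat_mul]
  intro h
  have h1 : Complex.exp ((d : ℂ) * (2 * Real.pi * Complex.I / b)) = 1 := by
    have := congrArg (starRingEnd ℂ) h
    rwa [RingHom.map_one, starRingEnd_self_apply] at this
  rw [Complex.exp_eq_one_iff] at h1
  obtain ⟨n, hn⟩ := h1
  have hbne : (b : ℂ) ≠ 0 := Nat.cast_ne_zero.mpr (by omega)
  have hpi : (2 * (Real.pi:ℂ) * Complex.I) ≠ 0 := by
    simp [Real.pi_ne_zero, Complex.I_ne_zero]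
  have : (d : ℂ) = n * b := by
    field_simp at hn
    have h2 : (d : ℂ) * (2 * (Real.pi:ℂ) * Complex.I) = (n * b) * (2 * (Real.pi:ℂ) * Complex.I) := by
      linear_combination (2 * (Real.pi:ℂ) * Complex.I) * hn
    exact mul_right_cancel₀ hpi h2
  have : (d : ℝ) = (n : ℝ) * b := by exact_mod_cast congrArg Complex.re this
  have hd : (d : ℤ) = n * b := by exact_mod_cast this
  have hd1' : (0:ℤ) < d := by exact_mod_cast hd1
  have hd2' : (d:ℤ) < b := by exact_mod_cast hd2
  have hb' : (0:ℤ) < b := by exact_mod_cast (by omega : 0 < b)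
  rcases le_or_gt n 0 with h | h
  · nlinarith
  · nlinarith

lemma pow_mod_cycle {z : ℂ} (hz : z ^ b = 1) (m : ℕ) : z ^ (m % b) = z ^ m := by
  conv_rhs => rw [← Nat.mod_add_div m b, pow_add, pow_mul, hz, one_pow, mul_one]


/-- digit is zero on [0, b^{-j'}) for j ≤ j' -/
lemma xdigit_eq_zero (hb : 2 ≤ b) {j : ℕ} {x : ℝ} (hx0 : 0 ≤ x)
    (hx1 : x < (b:ℝ) ^ (-(j:ℤ))) : xdigit b j x = 0 := by
  have hbpos : (0:ℝ) < b := by positivity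
  have h1 : x * (b:ℝ) ^ j < 1 := by
    have := mul_lt_mul_of_pos_right hx1 (show (0:ℝ) < (b:ℝ)^j by positivity)
    rwa [← zpow_natCast (b:ℝ) j, ← zpow_add₀ (ne_of_gt hbpos), neg_add_cancel,
      zpow_zero] at this
  have h0 : 0 ≤ x * (b:ℝ) ^ j := by positivity
  have : ⌊x * (b:ℝ) ^ j⌋ = 0 := Int.floor_eq_zero_iff.mpr ⟨h0, h1⟩
  simp [xdigit, this]

/-- the digit at position exactly a of c·b^{-a} + y, with 0 ≤ y < b^{-a} -/
lemma xdigit_shift_exact (hb : 2 ≤ b) {a : ℕ} (c : ℕ) {y : ℝ} (hy0 : 0 ≤ y)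
    (hy1 : y < (b:ℝ) ^ (-(a:ℤ))) :
    xdigit b a ((c:ℝ) * (b:ℝ) ^ (-(a:ℤ)) + y) = c % b := by
  have hbpos : (0:ℝ) < b := by positivity
  have hzq : ((b:ℝ) ^ (-(a:ℤ))) * (b:ℝ) ^ a = 1 := by
    rw [← zpow_natCast (b:ℝ) a, ← zpow_add₀ (ne_of_gt hbpos), neg_add_cancel, zpow_zero]
  have key : ((c:ℝ) * (b:ℝ) ^ (-(a:ℤ)) + y) * (b:ℝ) ^ a = (c:ℝ) + y * (b:ℝ)^a := by
    ring_nf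
    rw [mul_assoc, hzq, mul_one]
  have h1 : y * (b:ℝ) ^ a < 1 := by
    have := mul_lt_mul_of_pos_right hy1 (show (0:ℝ) < (b:ℝ)^a by positivity)
    rwa [← zpow_natCast (b:ℝ) a, ← zpow_add₀ (ne_of_gt hbpos), neg_add_cancel,
      zpow_zero] at this
  have h0 : 0 ≤ y * (b:ℝ) ^ a := by positivity
  have hfl : ⌊((c:ℝ) * (b:ℝ) ^ (-(a:ℤ)) + y) * (b:ℝ) ^ a⌋ = c := by
    rw [key]
    rw [show ((c:ℝ) + y * (b:ℝ)^a) = (y * (b:ℝ)^a + (c:ℤ)) by push_cast; ring,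
      Int.floor_add_intCast, Int.floor_eq_zero_iff.mpr ⟨h0, h1⟩, zero_add]
  rw [xdigit, hfl]
  omega

/-- digits at positions j > s are invariant under shifts by multiples of b^{-s} -/
lemma xdigit_shift_inv (hb : 2 ≤ b) {j s : ℕ} (hsj : s < j) (m : ℕ) (y : ℝ) :
    xdigit b j ((m:ℝ) * (b:ℝ) ^ (-(s:ℤ)) + y) = xdigit b j y := by
  have hbpos : (0:ℝ) < b := by positivity
  have key : ((m:ℝ) * (b:ℝ) ^ (-(s:ℤ)) + y) * (b:ℝ) ^ j
      = y * (b:ℝ)^j + ((m * b ^ (j - s) : ℕ) : ℤ) := by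
    push_cast
    rw [add_mul, mul_assoc, ← zpow_natCast (b:ℝ) j, ← zpow_add₀ (ne_of_gt hbpos)]
    rw [show (-(s:ℤ) + j) = ((j - s : ℕ) : ℤ) by omega, zpow_natCast]
    ring
  rw [xdigit, key, Int.floor_add_intCast, xdigit]
  have hdvd : (b:ℤ) ∣ ((m * b ^ (j - s) : ℕ) : ℤ) := by
    have : b ∣ m * b ^ (j - s) := Dvd.dvd.mul_left (dvd_pow_self b (by omega)) m
    exact_mod_cast Int.natCast_dvd_natCast.mpr this
  obtain ⟨t, ht⟩ := hdvd
  rw [ht, Int.add_mul_emod_self_left]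


lemma wal_single (hb : 2 ≤ b) {d i : ℕ} (hd1 : 0 < d) (hd2 : d < b) (x : ℝ) :
    wal b (d * b ^ i) x = omega b ^ (d * xdigit b (i + 1) x) := by
  rw [wal]
  congr 1
  have hib : i < d * b ^ i := by
    calc i < b ^ i := Nat.lt_pow_self (by omega)
    _ ≤ d * b ^ i := Nat.le_mul_of_pos_left _ hd1
  rw [Finset.sum_eq_single i]
  · rw [Nat.mul_div_cancel _ (pow_pos (by omega : 0 < b) i)]
    rw [Nat.mod_eq_of_lt hd2]
  · intro j hj hji
    rcases lt_or_gt_of_ne hji with h | h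
    · obtain ⟨e, he⟩ : ∃ e, i = e + 1 + j := ⟨i - j - 1, by omega⟩
      subst he
      have : d * b ^ (e + 1 + j) / b ^ j = (d * b ^ e) * b := by
        rw [pow_add, ← mul_assoc, Nat.mul_div_cancel _ (pow_pos (by omega : 0 < b) j),
          pow_succ]
        ring
      rw [this, Nat.mul_mod_left, zero_mul]
    · have : d * b ^ i / b ^ j = 0 := by
        apply Nat.div_eq_of_lt
        calc d * b ^ i < b * b ^ i := by
              exact (Nat.mul_lt_mul_right (pow_pos (by omega : 0 < b) i)).mpr hd2
          _ = b ^ (i + 1) := by rw [pow_succ]; ring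
          _ ≤ b ^ j := Nat.pow_le_pow_right (by omega) (by omega)
      rw [this, Nat.zero_mod, zero_mul]
  · intro h; exact absurd (Finset.mem_range.mpr hib) h

lemma conj_wal_single (hb : 2 ≤ b) {d i : ℕ} (hd1 : 0 < d) (hd2 : d < b) (x : ℝ) :
    (starRingEnd ℂ) (wal b (d * b ^ i) x) = omegaBar b ^ (d * xdigit b (i + 1) x) := by
  rw [wal_single hb hd1 hd2, map_pow, omegaBar]

lemma xdigit_measurable (b j : ℕ) : Measurable (xdigit b j) := by
  unfold xdigit
  exact (measurable_from_top (f := fun z : ℤ => (z % (b:ℤ)).toNat)).comp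
    (Int.measurable_floor.comp (measurable_id.mul_const _))

lemma conj_wal_measurable (b k : ℕ) : Measurable fun x => (starRingEnd ℂ) (wal b k x) := by
  unfold wal
  apply Measurable.comp (measurable_from_top (f := fun n : ℕ => (starRingEnd ℂ) (omega b ^ n)))
  exact Finset.measurable_sum _ fun j _ =>
    (measurable_from_top (β := ℕ)).comp ((xdigit_measurable b (j+1)).comp measurable_id)

lemma norm_conj_wal (hb : 2 ≤ b) (k : ℕ) (x : ℝ) : ‖(starRingEnd ℂ) (wal b k x)‖ = 1 := by
  rw [Complex.norm_conj]
  rw [wal, norm_pow, show ‖omega b‖ = 1 from norm_omega hb, one_pow]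


def EL (b : ℕ) (L : List (ℕ × ℕ)) : List ℕ := L.map fun p => p.2 * b ^ p.1

def Jval (b : ℕ) (L : List (ℕ × ℕ)) : ℂ :=
  (L.map fun p => (b:ℂ) ^ (-(p.1 + 1 : ℤ)) / (1 - omegaBar b ^ p.2)).prod

lemma zpow_q_mul (hb : 2 ≤ b) (a : ℕ) : (b:ℝ) ^ (-(a:ℤ)) * (b:ℝ) ^ a = 1 := by
  have hbpos : (0:ℝ) < b := by positivity
  rw [← zpow_natCast (b:ℝ) a, ← zpow_add₀ (ne_of_gt hbpos), neg_add_cancel, zpow_zero]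

/-- statement of part (iii) for a list -/
def StIII (b : ℕ) (L : List (ℕ × ℕ)) : Prop :=
  ∀ i d, L.head? = some (i, d) → ∀ c : ℕ, ∀ x' : ℝ, 0 ≤ x' → x' ≤ (b:ℝ) ^ (-(i + 1 : ℤ)) →
    WAux b (EL b L) ((c:ℝ) * (b:ℝ) ^ (-(i + 1 : ℤ)) + x')
      = (1 - (omegaBar b ^ d) ^ c) * Jval b L + (omegaBar b ^ d) ^ c * WAux b (EL b L) x'

lemma shift_of (hb : 2 ≤ b) (L : List (ℕ × ℕ)) (h3 : StIII b L) :
    ∀ s, (∀ p ∈ L, s ≤ p.1) → ∀ m : ℕ, ∀ y : ℝ, 0 ≤ y → y ≤ (b:ℝ) ^ (-(s:ℤ)) →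
      WAux b (EL b L) ((m:ℝ) * (b:ℝ) ^ (-(s:ℤ)) + y) = WAux b (EL b L) y := by
  obtain _ | ⟨⟨i, d⟩, T⟩ := L
  · intro s _ m y _ _; rfl
  intro s hs m y hy0 hy1
  have hsi : s ≤ i := hs (i, d) (by simp)
  have hbpos : (0:ℝ) < b := by positivity
  set a : ℕ := i + 1 with ha
  set q : ℝ := (b:ℝ) ^ (-(a:ℤ)) with hq
  have hqpos : 0 < q := by positivity
  set e : ℕ := (⌊y * (b:ℝ) ^ a⌋).toNat with he
  have hfl0 : (0:ℤ) ≤ ⌊y * (b:ℝ) ^ a⌋ := Int.floor_nonneg.mpr (by positivity)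
  have hcast : ((e:ℕ):ℝ) = (⌊y * (b:ℝ) ^ a⌋ : ℝ) := by
    have := Int.toNat_of_nonneg hfl0
    rw [he]; exact_mod_cast congrArg (fun z : ℤ => (z:ℝ)) this
  have he1 : (e:ℝ) ≤ y * (b:ℝ) ^ a := by rw [hcast]; exact Int.floor_le _
  have he2 : y * (b:ℝ) ^ a < e + 1 := by rw [hcast]; exact Int.lt_floor_add_one _
  have hqa : q * (b:ℝ) ^ a = 1 := zpow_q_mul hb a
  set y'' : ℝ := y - e * q with hy''
  have h0'' : 0 ≤ y'' := by
    have h := mul_le_mul_of_nonneg_right he1 (le_of_lt hqpos)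
    rw [hy'']; nlinarith
  have h1'' : y'' ≤ q := by
    have h := mul_lt_mul_of_pos_right he2 hqpos
    rw [hy'']; nlinarith
  have hexp : (b:ℝ) ^ (-(s:ℤ)) = (b ^ (a - s) : ℕ) * q := by
    rw [hq]
    push_cast
    rw [← zpow_natCast (b:ℝ) (a - s), ← zpow_add₀ (ne_of_gt hbpos)]
    congr 1
    omega
  have hsum : (m:ℝ) * (b:ℝ) ^ (-(s:ℤ)) + y = ((m * b ^ (a - s) + e : ℕ):ℝ) * q + y'' := by
    rw [hexp, hy'']
    push_cast
    ring
  have hsum2 : y = ((e:ℕ):ℝ) * q + y'' := by rw [hy'']; ring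
  set z : ℂ := omegaBar b ^ d with hz
  have hzb : z ^ b = 1 := by
    rw [hz, ← pow_mul, mul_comm, pow_mul, omegaBar_pow_b hb, one_pow]
  have hzc : z ^ (m * b ^ (a - s) + e) = z ^ e := by
    rw [← pow_mod_cycle hzb (m * b ^ (a - s) + e), ← pow_mod_cycle hzb e]
    congr 1
    have hdvd : b ∣ m * b ^ (a - s) := Dvd.dvd.mul_left (dvd_pow_self b (by omega)) m
    obtain ⟨t, ht⟩ := hdvd
    rw [ht, Nat.mul_add_mod]
  have hqeq : (b:ℝ) ^ (-(i + 1 : ℤ)) = q := by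
    rw [hq, ha]; norm_num
  have h3' : ∀ c : ℕ, ∀ x' : ℝ, 0 ≤ x' → x' ≤ q →
      WAux b (EL b ((i,d)::T)) ((c:ℝ) * q + x')
        = (1 - z ^ c) * Jval b ((i,d)::T) + z ^ c * WAux b (EL b ((i,d)::T)) x' := by
    intro c x' hx0 hx1
    have := h3 i d rfl c x' hx0 (by rw [hqeq]; exact hx1)
    rwa [hqeq] at this
  rw [hsum, h3' _ _ h0'' h1'', hzc, hsum2, h3' e _ h0'' h1'']


lemma step (hb : 2 ≤ b) (i d : ℕ) (T : List (ℕ × ℕ))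
    (hd1 : 0 < d) (hd2 : d < b) (hT : ∀ p ∈ T, i < p.1)
    (contT : Continuous (WAux b (EL b T)))
    (intT : (∫ x in (0:ℝ)..1, WAux b (EL b T) x) = Jval b T)
    (h3T : StIII b T) :
    Continuous (WAux b (EL b ((i, d) :: T))) ∧
    (∫ x in (0:ℝ)..1, WAux b (EL b ((i, d) :: T)) x) = Jval b ((i, d) :: T) ∧
    StIII b ((i, d) :: T) := by
  have hbpos : (0:ℝ) < b := by positivity
  set a : ℕ := i + 1 with ha
  set q : ℝ := (b:ℝ) ^ (-(a:ℤ)) with hqdef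
  have hq0 : 0 ≤ q := by positivity
  have hqeq : (b:ℝ) ^ (-(i + 1 : ℤ)) = q := by rw [hqdef, ha]; norm_num
  set WT : ℝ → ℂ := WAux b (EL b T) with hWT
  set f : ℝ → ℂ := fun y => (starRingEnd ℂ) (wal b (d * b ^ i) y) * WT y with hf
  have hWL : ∀ x : ℝ, WAux b (EL b ((i, d) :: T)) x = ∫ y in (0:ℝ)..x, f y :=
    fun _ => rfl
  have hfint : ∀ u v : ℝ, IntervalIntegrable f volume u v := by
    intro u v
    have h1 := contT.intervalIntegrable (μ := volume) u v
    rw [intervalIntegrable_iff] at h1 ⊢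
    exact Integrable.bdd_mul h1 ((conj_wal_measurable b _).aestronglyMeasurable)
      (Filter.Eventually.of_forall fun x => le_of_eq (norm_conj_wal hb _ x))
  have hcont : Continuous (WAux b (EL b ((i, d) :: T))) := by
    have h := intervalIntegral.continuous_primitive hfint 0
    exact h.congr fun x => (hWL x).symm
  have shiftT : ∀ (m : ℕ) (y : ℝ), 0 ≤ y → y ≤ q → WT ((m:ℝ) * q + y) = WT y := by
    intro m y h1 h2
    exact shift_of hb T h3T a (fun p hp => by have := hT p hp; omega) m y h1 h2
  set z : ℂ := omegaBar b ^ d with hz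
  have hzb : z ^ b = 1 := by
    rw [hz, ← pow_mul, mul_comm, pow_mul, omegaBar_pow_b hb, one_pow]
  have hzne : z ≠ 1 := omegaBar_pow_ne_one hb hd1 hd2
  have hz1 : (1:ℂ) - z ≠ 0 := sub_ne_zero_of_ne (Ne.symm hzne)
  have hz1' : z - 1 ≠ 0 := sub_ne_zero_of_ne hzne
  -- the linear count of blocks
  have hNq : ((b ^ a : ℕ) : ℝ) * q = 1 := by
    push_cast
    rw [hqdef, ← zpow_natCast (b:ℝ) a, ← zpow_add₀ (ne_of_gt hbpos), add_neg_cancel, zpow_zero]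
  -- ∫_0^q WT = b^{-a} * Jval T
  have hBT : (∫ y in (0:ℝ)..q, WT y) = (b:ℂ) ^ (-(a:ℤ)) * Jval b T := by
    have hblocks : ∀ m : ℕ, (∫ y in ((m:ℝ) * q)..(((m+1:ℕ)):ℝ) * q, WT y)
        = ∫ y in (0:ℝ)..q, WT y := by
      intro m
      have h1 := intervalIntegral.integral_comp_add_right (a := 0) (b := q) WT ((m:ℝ) * q)
      rw [zero_add] at h1
      have h2 : (((m+1:ℕ)):ℝ) * q = q + (m:ℝ) * q := by push_cast; ring
      rw [h2, ← h1]
      apply intervalIntegral.integral_congr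
      intro y hy
      rw [Set.uIcc_of_le hq0] at hy
      show WT (y + (m:ℝ) * q) = WT y
      rw [add_comm]
      exact shiftT m y hy.1 hy.2
    have hsum := intervalIntegral.sum_integral_adjacent_intervals
      (a := fun m : ℕ => (m:ℝ) * q) (n := b ^ a) (μ := volume)
      (fun k _ => contT.intervalIntegrable _ _)
    simp only [Nat.cast_zero, zero_mul] at hsum
    rw [hNq] at hsum
    rw [Finset.sum_congr rfl fun m _ => hblocks m, Finset.sum_const, Finset.card_range,
      intT] at hsum
    have hcast : ((b ^ a : ℕ) : ℂ) ≠ 0 := Nat.cast_ne_zero.mpr (by positivity)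
    have : ((b ^ a : ℕ) : ℂ) * (∫ y in (0:ℝ)..q, WT y) = Jval b T := by
      rw [← hsum, nsmul_eq_mul]
    have hcpow : (b:ℂ) ^ (-(a:ℤ)) = ((b ^ a : ℕ) : ℂ)⁻¹ := by
      rw [zpow_neg, zpow_natCast]
      norm_cast
    rw [hcpow, inv_mul_eq_div, eq_div_iff hcast]
    linear_combination this
  -- a.e. avoidance of the endpoint q
  have haeq : ∀ᵐ y : ℝ, y ≠ q := by
    rw [MeasureTheory.ae_iff]
    simp only [ne_eq, not_not, Set.setOf_eq_eq_singleton]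
    exact Real.volume_singleton
  -- block integrals of f
  have hblockf : ∀ c : ℕ, ∀ x' : ℝ, 0 ≤ x' → x' ≤ q →
      (∫ y in ((c:ℝ) * q)..((c:ℝ) * q + x'), f y) = z ^ c * ∫ y in (0:ℝ)..x', WT y := by
    intro c x' h0 h1
    have h2 := intervalIntegral.integral_comp_add_right (a := 0) (b := x') f ((c:ℝ) * q)
    rw [zero_add] at h2
    rw [show (c:ℝ) * q + x' = x' + (c:ℝ) * q from add_comm _ _, ← h2]
    rw [← intervalIntegral.integral_const_mul]
    apply intervalIntegral.integral_congr_ae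
    filter_upwards [haeq] with y hy hymem
    rw [Set.uIoc_of_le h0] at hymem
    have hy0 : 0 ≤ y := le_of_lt hymem.1
    have hyq : y < q := lt_of_le_of_ne (le_trans hymem.2 h1) hy
    rw [add_comm, hf]
    show (starRingEnd ℂ) (wal b (d * b ^ i) ((c:ℝ) * q + y)) * WT ((c:ℝ) * q + y) = _
    rw [conj_wal_single hb hd1 hd2, show i + 1 = a from rfl,
      xdigit_shift_exact hb c hy0 hyq, shiftT c y hy0 (le_of_lt hyq),
      pow_mul, pow_mod_cycle hzb c]
  -- W_L equals the primitive of WT on [0,q]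
  have hW0 : ∀ x' : ℝ, 0 ≤ x' → x' ≤ q →
      WAux b (EL b ((i, d) :: T)) x' = ∫ y in (0:ℝ)..x', WT y := by
    intro x' h0 h1
    rw [hWL]
    apply intervalIntegral.integral_congr_ae
    filter_upwards [haeq] with y hy hymem
    rw [Set.uIoc_of_le h0] at hymem
    have hy0 : 0 ≤ y := le_of_lt hymem.1
    have hyq : y < q := lt_of_le_of_ne (le_trans hymem.2 h1) hy
    show (starRingEnd ℂ) (wal b (d * b ^ i) y) * WT y = WT y
    rw [conj_wal_single hb hd1 hd2, show i + 1 = a from rfl,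
      xdigit_eq_zero hb hy0 hyq, mul_zero, pow_zero, one_mul]
  -- the value of Jval on the cons
  have hJL : Jval b ((i, d) :: T) = (b:ℂ) ^ (-(a:ℤ)) / (1 - z) * Jval b T := by
    simp only [Jval, List.map_cons, List.prod_cons]
    rw [show (-(↑i + 1) : ℤ) = (-(a:ℤ)) by rw [ha]; push_cast; ring, ← hz, ← Jval]
  -- part (iii), internal form
  have h3' : ∀ c : ℕ, ∀ x' : ℝ, 0 ≤ x' → x' ≤ q →
      WAux b (EL b ((i, d) :: T)) ((c:ℝ) * q + x')
        = (1 - z ^ c) * Jval b ((i, d) :: T)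
          + z ^ c * WAux b (EL b ((i, d) :: T)) x' := by
    intro c x' h0 h1
    rw [hWL]
    rw [← intervalIntegral.integral_add_adjacent_intervals (hfint 0 ((c:ℝ) * q))
      (hfint ((c:ℝ) * q) ((c:ℝ) * q + x'))]
    have hfirst : (∫ y in (0:ℝ)..((c:ℝ) * q), f y)
        = ((z ^ c - 1) / (z - 1)) * ((b:ℂ) ^ (-(a:ℤ)) * Jval b T) := by
      have hsum := intervalIntegral.sum_integral_adjacent_intervals
        (a := fun m : ℕ => (m:ℝ) * q) (n := c) (μ := volume) (fun k _ => hfint _ _)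
      simp only [Nat.cast_zero, zero_mul] at hsum
      rw [← hsum]
      have hterm : ∀ m : ℕ, (∫ y in ((m:ℝ) * q)..((((m+1:ℕ)):ℝ) * q), f y)
          = z ^ m * ((b:ℂ) ^ (-(a:ℤ)) * Jval b T) := by
        intro m
        have h := hblockf m q hq0 (le_refl q)
        rw [show (((m+1:ℕ)):ℝ) * q = (m:ℝ) * q + q by push_cast; ring, h, hBT]
      rw [Finset.sum_congr rfl fun m _ => hterm m, ← Finset.sum_mul,
        geom_sum_eq hzne c]
    have hsecond : (∫ y in ((c:ℝ) * q)..((c:ℝ) * q + x'), f y)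
        = z ^ c * WAux b (EL b ((i, d) :: T)) x' := by
      rw [hblockf c x' h0 h1, hW0 x' h0 h1]
    have hdiv : (z ^ c - 1) / (z - 1) = (1 - z ^ c) / (1 - z) := by
      rw [← neg_sub (1:ℂ) (z ^ c), ← neg_sub (1:ℂ) z, neg_div_neg_eq]
    rw [hfirst, hsecond, hJL, hdiv]
    ring
  -- part (ii') the full integral
  have hIntL : (∫ x in (0:ℝ)..1, WAux b (EL b ((i, d) :: T)) x) = Jval b ((i, d) :: T) := by
    set WL := WAux b (EL b ((i, d) :: T)) with hWLs
    set JL := Jval b ((i, d) :: T) with hJLs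
    have hblocks : ∀ c : ℕ, (∫ x in ((c:ℝ) * q)..((((c+1:ℕ)):ℝ) * q), WL x)
        = (q : ℂ) * ((1 - z ^ c) * JL) + z ^ c * ∫ x in (0:ℝ)..q, WL x := by
      intro c
      have h1 := intervalIntegral.integral_comp_add_right (a := 0) (b := q) WL ((c:ℝ) * q)
      rw [zero_add] at h1
      rw [show (((c+1:ℕ)):ℝ) * q = q + (c:ℝ) * q by push_cast; ring, ← h1]
      have h2 : ∀ x ∈ Set.uIcc (0:ℝ) q, (fun x => WL (x + (c:ℝ) * q)) x
          = (1 - z ^ c) * JL + z ^ c * WL x := by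
        intro x hx
        rw [Set.uIcc_of_le hq0] at hx
        show WL (x + (c:ℝ) * q) = _
        rw [add_comm]
        exact h3' c x hx.1 hx.2
      rw [intervalIntegral.integral_congr h2,
        intervalIntegral.integral_add (intervalIntegrable_const)
          ((hcont.intervalIntegrable _ _).const_mul _),
        intervalIntegral.integral_const, intervalIntegral.integral_const_mul,
        sub_zero, Complex.real_smul]
    have hsum := intervalIntegral.sum_integral_adjacent_intervals
      (a := fun m : ℕ => (m:ℝ) * q) (n := b ^ a) (μ := volume)
      (fun k _ => hcont.intervalIntegrable _ _)
    simp only [Nat.cast_zero, zero_mul] at hsum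
    rw [hNq] at hsum
    rw [← hsum]
    have hgeo : ∑ c ∈ Finset.range (b ^ a), z ^ c = 0 := by
      rw [geom_sum_eq hzne]
      have : z ^ b ^ a = 1 := by
        rw [ha, pow_succ, pow_mul', hzb, one_pow]
      rw [this, sub_self, zero_div]
    rw [Finset.sum_congr rfl fun c _ => hblocks c]
    rw [Finset.sum_add_distrib, ← Finset.sum_mul, hgeo, zero_mul, add_zero,
      ← Finset.mul_sum, ← Finset.sum_mul, Finset.sum_sub_distrib, hgeo, sub_zero,
      Finset.sum_const, Finset.card_range, nsmul_eq_mul, mul_one]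
    have hNqC : ((q:ℝ):ℂ) * ((b ^ a : ℕ) : ℂ) = 1 := by
      rw [mul_comm]
      exact_mod_cast congrArg (fun r : ℝ => (r:ℂ)) hNq
    calc ((q:ℝ):ℂ) * (((b ^ a : ℕ):ℂ) * JL) = ((q:ℝ):ℂ) * ((b ^ a : ℕ):ℂ) * JL := by ring
    _ = JL := by rw [hNqC, one_mul]
  refine ⟨hcont, hIntL, ?_⟩
  intro i' d' hhead c x' h0 h1
  have hid : i' = i ∧ d' = d := by
    simp only [List.head?_cons, Option.some.injEq, Prod.mk.injEq] at hhead
    exact ⟨hhead.1.symm, hhead.2.symm⟩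
  obtain ⟨rfl, rfl⟩ := hid
  rw [hqeq] at h1 ⊢
  exact h3' c x' h0 h1


def Good (b : ℕ) (L : List (ℕ × ℕ)) : Prop :=
  L.Pairwise (fun p q => p.1 < q.1) ∧ ∀ p ∈ L, 0 < p.2 ∧ p.2 < b

theorem main (hb : 2 ≤ b) : ∀ L, Good b L →
    Continuous (WAux b (EL b L)) ∧
    (∫ x in (0:ℝ)..1, WAux b (EL b L) x) = Jval b L ∧ StIII b L := by
  intro L
  induction L with
  | nil =>
    intro _
    refine ⟨continuous_const, ?_, ?_⟩
    · show (∫ _ in (0:ℝ)..1, (1:ℂ)) = Jval b []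
      simp [Jval]
    · intro i d h
      simp at h
  | cons p T ih =>
    rintro ⟨hpair, hdig⟩
    obtain ⟨i, d⟩ := p
    have hgT : Good b T := ⟨hpair.of_cons, fun p hp => hdig p (List.mem_cons_of_mem _ hp)⟩
    obtain ⟨c1, c2, c3⟩ := ih hgT
    have hT : ∀ p ∈ T, i < p.1 := fun p hp => (List.pairwise_cons.mp hpair).1 p hp
    obtain ⟨hd1, hd2⟩ := hdig (i, d) List.mem_cons_self
    exact step hb i d T hd1 hd2 hT c1 c2 c3

/-- the filtered enumerated digit list of `k` -/
def Ldig (b k : ℕ) : List (ℕ × ℕ) := ((Nat.digits b k).zipIdx.map Prod.swap).filter fun p => p.2 ≠ 0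

lemma Ldig_good (hb : 2 ≤ b) (k : ℕ) : Good b (Ldig b k) := by
  constructor
  · have h1 : ((Nat.digits b k).zipIdx.map Prod.swap).Pairwise fun p q => p.1 < q.1 := by
      have h := List.pairwise_lt_range (n := (Nat.digits b k).length)
      rw [List.range_eq_range', ← List.zipIdx_map_snd] at h
      exact List.pairwise_map.mpr (List.pairwise_map.mp h)
    exact List.Pairwise.sublist List.filter_sublist h1
  · intro p hp
    rw [Ldig, List.mem_filter] at hp
    have hmem : p.2 ∈ Nat.digits b k := by
      obtain ⟨q, hq, rfl⟩ := List.mem_map.mp hp.1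
      exact List.fst_mem_of_mem_zipIdx hq
    refine ⟨?_, Nat.digits_lt_base (by omega) hmem⟩
    have := hp.2
    simp only [ne_eq, decide_eq_true_eq] at this
    omega

lemma Ldig_ne_nil (hb : 2 ≤ b) {k : ℕ} (hk : 0 < k) : Ldig b k ≠ [] := by
  intro hnil
  rw [Ldig, List.filter_eq_nil_iff] at hnil
  have hne : Nat.digits b k ≠ [] := Nat.digits_ne_nil_iff_ne_zero.mpr (by omega)
  have hdig := Nat.getLast_digit_ne_zero b (show k ≠ 0 by omega)
  have hmem : (Nat.digits b k).getLast hne ∈ Nat.digits b k := List.getLast_mem hne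
  obtain ⟨n, hn, hget⟩ := List.mem_iff_getElem.mp hmem
  have henum : ((n, (Nat.digits b k).getLast hne) : ℕ × ℕ) ∈ ((Nat.digits b k).zipIdx.map Prod.swap) := by
    refine List.mem_map.mpr ⟨((Nat.digits b k).getLast hne, n), ?_, rfl⟩
    rw [List.mem_zipIdx_iff_getElem?, List.getElem?_eq_getElem hn, hget]
  have h0 := hnil _ henum
  simp only [ne_eq, decide_eq_true_eq, not_not] at h0
  exact hdig h0

lemma digits_getD (hb : 2 ≤ b) : ∀ i k : ℕ, (Nat.digits b k).getD i 0 = k / b ^ i % b := by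
  intro i
  induction i with
  | zero =>
    intro k
    rcases Nat.eq_zero_or_pos k with rfl | hk
    · simp
    · rw [Nat.digits_def' (by omega : 1 < b) hk]
      simp
  | succ i ih =>
    intro k
    rcases Nat.eq_zero_or_pos k with rfl | hk
    · simp
    · rw [Nat.digits_def' (by omega : 1 < b) hk]
      show (Nat.digits b (k / b)).getD i 0 = _
      rw [ih (k / b), Nat.div_div_eq_div_mul]
      congr 2
      rw [pow_succ]
      ring

lemma Jval_formula (hb : 2 ≤ b) (L : List (ℕ × ℕ)) :
    Jval b L = (b:ℂ) ^ (-(((L.map fun p => p.1 + 1).sum : ℕ) : ℤ))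
      / (L.map fun p => 1 - omegaBar b ^ p.2).prod := by
  induction L with
  | nil => simp [Jval]
  | cons p T ih =>
    obtain ⟨i, d⟩ := p
    have hbne : (b:ℂ) ≠ 0 := Nat.cast_ne_zero.mpr (by omega)
    simp only [Jval, List.map_cons, List.prod_cons, List.sum_cons]
    have hfold : (List.map (fun p => (b:ℂ) ^ (-(p.1 + 1 : ℤ)) / (1 - omegaBar b ^ p.2)) T).prod
        = Jval b T := rfl
    rw [hfold, ih, div_mul_div_comm, ← zpow_add₀ hbne]
    congr 2
    push_cast
    ring


lemma hterms (b k : ℕ) : terms b k = EL b (Ldig b k) := rfl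

lemma hmu (b k : ℕ) : mu b k = ((Ldig b k).map fun p => p.1 + 1).sum := by
  rw [mu, alist, List.sum_reverse]; rfl

lemma hkappas (b k : ℕ) : kappas b k = (Ldig b k).map Prod.snd := rfl

lemma head_props (hb : 2 ≤ b) {k i₀ d₀ : ℕ} {T : List (ℕ × ℕ)}
    (hLd : Ldig b k = (i₀, d₀) :: T) :
    aLow b k = i₀ + 1 ∧ kapLow b k = d₀ := by
  have haLow : aLow b k = i₀ + 1 := by
    rw [aLow, alist, List.getLast?_reverse]
    show ((List.map (fun p => p.1 + 1) (Ldig b k)).head?).getD 0 = i₀ + 1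
    rw [hLd, List.head?_map]
    rfl
  refine ⟨haLow, ?_⟩
  have hmem : ((i₀, d₀) : ℕ × ℕ) ∈ ((Nat.digits b k).zipIdx.map Prod.swap) := by
    have : ((i₀, d₀) : ℕ × ℕ) ∈ Ldig b k := by rw [hLd]; exact List.mem_cons_self
    exact (List.mem_filter.mp this).1
  have hget : (Nat.digits b k)[i₀]? = some d₀ := by
    obtain ⟨q, hq, hqe⟩ := List.mem_map.mp hmem
    obtain ⟨q1, q2⟩ := q
    simp only [Prod.swap, Prod.mk.injEq] at hqe
    obtain ⟨rfl, rfl⟩ := hqe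
    exact List.mem_zipIdx_iff_getElem?.mp hq
  have hgetD : (Nat.digits b k).getD i₀ 0 = d₀ := by
    rw [List.getD_eq_getElem?_getD, hget]; rfl
  rw [kapLow, haLow, Nat.add_sub_cancel, ← digits_getD hb i₀ k, hgetD]


theorem I_value_aux (hb : 2 ≤ b) :
    (∀ k : ℕ, I b k =
      (b:ℂ) ^ (-(mu b k : ℤ)) / (((kappas b k).map fun κ => 1 - omegaBar b ^ κ).prod)) ∧
    (∀ k : ℕ, 0 < k → W b k ((b:ℝ) ^ (-(aLow b k : ℤ))) =
      (b:ℂ) ^ (-(mu b k : ℤ)) /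
        (((kappas b k).tail.map fun κ => 1 - omegaBar b ^ κ).prod)) ∧
    (∀ k : ℕ, 0 < k → ∀ (c : ℕ) (x' : ℝ), c < b ^ aLow b k → 0 ≤ x' →
      x' < (b:ℝ) ^ (-(aLow b k : ℤ)) →
      W b k ((c : ℝ) * (b:ℝ) ^ (-(aLow b k : ℤ)) + x') =
        (1 - omegaBar b ^ (c * kapLow b k)) * I b k +
          omegaBar b ^ (c * kapLow b k) * W b k x') := by
  have hbC : (b:ℂ) ≠ 0 := Nat.cast_ne_zero.mpr (by omega)
  have hIJ : ∀ k, I b k = Jval b (Ldig b k) := by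
    intro k
    exact (main hb (Ldig b k) (Ldig_good hb k)).2.1
  have hprodfold : ∀ (M : List (ℕ × ℕ)),
      ((M.map Prod.snd).map fun κ => 1 - omegaBar b ^ κ).prod
        = (M.map fun p => 1 - omegaBar b ^ p.2).prod := by
    intro M
    rw [List.map_map]
    rfl
  refine ⟨?_, ?_, ?_⟩
  · -- part (i)
    intro k
    rw [hIJ k, Jval_formula hb, hmu, hkappas, hprodfold]
  · -- part (ii)
    intro k hk
    obtain ⟨⟨i₀, d₀⟩, T, hLd⟩ := List.exists_cons_of_ne_nil (Ldig_ne_nil hb hk)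
    obtain ⟨haLow, _⟩ := head_props hb hLd
    obtain ⟨_, _, h3⟩ := main hb (Ldig b k) (Ldig_good hb k)
    have hd := (Ldig_good hb k).2 (i₀, d₀) (by rw [hLd]; exact List.mem_cons_self)
    set z : ℂ := omegaBar b ^ d₀ with hz
    have hz1 : (1:ℂ) - z ≠ 0 :=
      sub_ne_zero_of_ne (Ne.symm (omegaBar_pow_ne_one hb hd.1 hd.2))
    have hhead : (Ldig b k).head? = some (i₀, d₀) := by rw [hLd]; rfl
    have happ := h3 i₀ d₀ hhead 1 0 le_rfl (by positivity)
    have hW00 : WAux b (EL b (Ldig b k)) 0 = 0 := by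
      rw [hLd]
      exact intervalIntegral.integral_same
    rw [hW00] at happ
    simp only [mul_zero, add_zero, pow_one] at happ
    have hexp : ((1:ℕ):ℝ) * (b:ℝ) ^ (-(i₀ + 1 : ℤ)) = (b:ℝ) ^ (-(aLow b k : ℤ)) := by
      rw [haLow]; push_cast; ring
    rw [hexp] at happ
    have hWW : W b k ((b:ℝ) ^ (-(aLow b k : ℤ))) = (1 - z) * Jval b (Ldig b k) := happ
    rw [hWW]
    have hJcons : Jval b (Ldig b k)
        = (b:ℂ) ^ (-(i₀ + 1 : ℤ)) / (1 - z) * Jval b T := by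
      rw [hLd]
      simp only [Jval, List.map_cons, List.prod_cons, hz]
    rw [hJcons, Jval_formula hb T, hmu, hLd]
    have htail : ((kappas b k).tail.map fun κ => 1 - omegaBar b ^ κ).prod
        = (T.map fun p => 1 - omegaBar b ^ p.2).prod := by
      rw [hkappas, hLd]
      show ((T.map Prod.snd).map fun κ => 1 - omegaBar b ^ κ).prod = _
      exact hprodfold T
    rw [htail]
    simp only [List.map_cons, List.sum_cons]
    rw [mul_comm ((1:ℂ)-z), mul_right_comm, div_mul_cancel₀ _ hz1, ← mul_div_assoc, ← zpow_add₀ hbC]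
    congr 2
    push_cast
    ring
  · -- part (iii)
    intro k hk c x' _ hx0 hx1
    obtain ⟨⟨i₀, d₀⟩, T, hLd⟩ := List.exists_cons_of_ne_nil (Ldig_ne_nil hb hk)
    obtain ⟨haLow, hkap⟩ := head_props hb hLd
    obtain ⟨_, _, h3⟩ := main hb (Ldig b k) (Ldig_good hb k)
    have hhead : (Ldig b k).head? = some (i₀, d₀) := by rw [hLd]; rfl
    have hexp : (b:ℝ) ^ (-(aLow b k : ℤ)) = (b:ℝ) ^ (-(i₀ + 1 : ℤ)) := by
      rw [haLow]; push_cast; ring_nf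
    rw [hexp] at hx1 ⊢
    have happ := h3 i₀ d₀ hhead c x' hx0 (le_of_lt hx1)
    have hpow : omegaBar b ^ (c * kapLow b k) = (omegaBar b ^ d₀) ^ c := by
      rw [hkap, mul_comm, pow_mul]
    rw [hpow, hIJ k]
    exact happ


/-- Lemma 3.2 (the values of `I(k)` and `W_k(b^{-a_v})`). -/
theorem I_value (b : ℕ) (hb : 2 ≤ b) :
    (∀ k : ℕ, I b k =
      (b:ℂ) ^ (-(mu b k : ℤ)) / (((kappas b k).map fun κ => 1 - omegaBar b ^ κ).prod)) ∧
    (∀ k : ℕ, 0 < k → W b k ((b:ℝ) ^ (-(aLow b k : ℤ))) =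
      (b:ℂ) ^ (-(mu b k : ℤ)) /
        (((kappas b k).tail.map fun κ => 1 - omegaBar b ^ κ).prod)) ∧
    (∀ k : ℕ, 0 < k → ∀ (c : ℕ) (x' : ℝ), c < b ^ aLow b k → 0 ≤ x' →
      x' < (b:ℝ) ^ (-(aLow b k : ℤ)) →
      W b k ((c : ℝ) * (b:ℝ) ^ (-(aLow b k : ℤ)) + x') =
        (1 - omegaBar b ^ (c * kapLow b k)) * I b k +
          omegaBar b ^ (c * kapLow b k) * W b k x') :=
  I_value_aux hb

end WalshPaper
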